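/- arXiv:math/0508196 — 6 statements merged into one kernel-verified Lean document; each statement's English description precedes it below -/
import Mathlib

section
/- In the integral group ring of the generalized quaternion group Q_{4n} = ⟨x, y | x^n = y^2, y x y^{-1} = x^{-1}⟩, the left ideal P generated by a+by and x+1 (for integers a, b) is a two-sided ideal. -/
open MonoidAlgebra

abbrev QR (n : ℕ) : Type := MonoidAlgebra ℤ (QuaternionGroup n)

noncomputable def Xq (n : ℕ) : QR n := of ℤ (QuaternionGroup n) (QuaternionGroup.a 1)
noncomputable def Yq (n : ℕ) : QR n := of ℤ (QuaternionGroup n) (QuaternionGroup.xa 0)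

noncomputable def Pideal (n : ℕ) (a b : ℤ) : Ideal (QR n) :=
  Ideal.span {(a : QR n) + (b : QR n) * Yq n, Xq n + 1}

/-!
A left ideal is two-sided exactly when its idealizer `{r | P * r ⊆ P}`, which is a subring, is
the whole ring. Since `x` and `y` generate `Q_{4n}` as a monoid (`x⁻¹ = y x y³`), it suffices
that right multiplication by `x` and `y` maps both generators of `P` into `P`, which is read off
from `(x + 1) x = x (x + 1)`, `(x + 1) y = y x⁻¹ (x + 1)`, `(a + b y) y = y (a + b y)` and
`(a + b y) x = x (a + b y) + b y (1 - x⁻¹) (x + 1)`.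
-/

namespace Ideal

variable {R : Type*} [Ring R]

/-- The largest subring in which the left ideal `I` is a two-sided ideal. -/
def idealizer (I : Ideal R) : Subring R where
  carrier := {r | ∀ p ∈ I, p * r ∈ I}
  mul_mem' {r s} hr hs p hp := mul_assoc p r s ▸ hs _ (hr p hp)
  one_mem' p hp := (mul_one p).symm ▸ hp
  add_mem' {r s} hr hs p hp := (mul_add p r s).symm ▸ I.add_mem (hr p hp) (hs p hp)
  zero_mem' p _ := (mul_zero p).symm ▸ I.zero_mem
  neg_mem' {r} hr p hp := (mul_neg p r).symm ▸ I.neg_mem (hr p hp)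

theorem mem_idealizer {I : Ideal R} {r : R} : r ∈ I.idealizer ↔ ∀ p ∈ I, p * r ∈ I := Iff.rfl

theorem mem_idealizer_span {T : Set R} {r : R} :
    r ∈ (span T).idealizer ↔ ∀ t ∈ T, t * r ∈ span T := by
  refine ⟨fun h t ht => h t (subset_span ht), fun h p hp => ?_⟩
  induction hp using Submodule.span_induction with
  | mem t ht => exact h t ht
  | zero => simp
  | add p q _ _ hp hq => rw [add_mul]; exact add_mem hp hq
  | smul c p _ hp => rw [smul_eq_mul, mul_assoc]; exact mul_mem_left _ c hp

end Ideal

theorem MonoidAlgebra.subring_eq_top_of_closure_eq_top {G : Type*} [Monoid G] {S : Set G}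
    (hS : Submonoid.closure S = ⊤) {A : Subring (MonoidAlgebra ℤ G)}
    (hA : ∀ g ∈ S, of ℤ G g ∈ A) : A = ⊤ := by
  have hof : ∀ g, of ℤ G g ∈ A := by
    have : Submonoid.closure S ≤ A.toSubmonoid.comap (of ℤ G) := Submonoid.closure_le.mpr hA
    exact fun g => this (hS ▸ Submonoid.mem_top g)
  refine (Subring.eq_top_iff' A).mpr fun f => ?_
  induction f using MonoidAlgebra.induction_on with
  | of g => exact hof g
  | add f g hf hg => exact add_mem hf hg
  | smul c f hf => exact zsmul_mem hf c

namespace QuaternionGroup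

theorem closure_a_one_xa_zero (n : ℕ) :
    Submonoid.closure {a 1, xa 0} = (⊤ : Submonoid (QuaternionGroup n)) := by
  set M := Submonoid.closure {a 1, xa (0 : ZMod (2 * n))}
  have ha : a 1 ∈ M := Submonoid.subset_closure (by simp)
  have hxa : xa 0 ∈ M := Submonoid.subset_closure (by simp)
  -- needed separately because for `n = 0` no positive power of `a 1` is its inverse
  have ha_neg : a (-1) ∈ M := by
    have : a (-1) = xa 0 * a 1 * (xa 0 * xa 0 * xa (0 : ZMod (2 * n))) := by simp
    rw [this]
    exact mul_mem (mul_mem hxa ha) (mul_mem (mul_mem hxa hxa) hxa)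
  have ha_int : ∀ k : ℤ, a (k : ZMod (2 * n)) ∈ M := by
    intro k
    induction k using Int.induction_on with
    | zero => simp [M.one_mem]
    | succ k hk => simpa using mul_mem hk ha
    | pred k hk => simpa [sub_eq_add_neg] using mul_mem hk ha_neg
  refine eq_top_iff.mpr fun g _ => ?_
  obtain ⟨k, rfl⟩ | ⟨k, rfl⟩ : (∃ k : ℤ, g = a k) ∨ ∃ k : ℤ, g = xa k := by
    rcases g with i | i <;> obtain ⟨k, rfl⟩ := ZMod.intCast_surjective i <;> simp
  · exact ha_int k
  · simpa using mul_mem hxa (ha_int k)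

end QuaternionGroup

section GroupRing

open QuaternionGroup

variable {n : ℕ}

theorem Xq_mul_Yq :
    Xq n * Yq n = Yq n * of ℤ (QuaternionGroup n) (a (-1)) := by
  simp only [Xq, Yq, ← map_mul, a_mul_xa, xa_mul_a, zero_sub, zero_add]

theorem of_a_neg_one_mul_Xq : of ℤ (QuaternionGroup n) (a (-1)) * Xq n = 1 := by
  simp only [Xq, ← map_mul, a_mul_a, neg_add_cancel, a_zero, map_one]

theorem Xq_add_one_mul_Yq :
    (Xq n + 1) * Yq n = Yq n * of ℤ (QuaternionGroup n) (a (-1)) * (Xq n + 1) := by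
  rw [add_mul, one_mul, Xq_mul_Yq, mul_add, mul_assoc, of_a_neg_one_mul_Xq, mul_one, mul_one,
    add_comm]

theorem intCast_add_mul_Yq_mul_Xq (c d : ℤ) :
    ((c : QR n) + d * Yq n) * Xq n = Xq n * (c + d * Yq n)
      + d * (Yq n * (1 - of ℤ (QuaternionGroup n) (a (-1))) * (Xq n + 1)) := by
  set u := of ℤ (QuaternionGroup n) (a (-1))
  have hyux : Yq n * u * Xq n = Yq n := by rw [mul_assoc, of_a_neg_one_mul_Xq, mul_one]
  have hcomm : Yq n * (1 - u) * (Xq n + 1) = Yq n * Xq n - Xq n * Yq n := by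
    rw [Xq_mul_Yq]
    simp only [mul_sub, sub_mul, mul_add, mul_one, hyux]
    abel
  rw [hcomm, mul_add, ← mul_assoc (Xq n), ← Int.cast_comm d, ← Int.cast_comm c]
  noncomm_ring

end GroupRing

section Pideal

variable {n : ℕ} {c d : ℤ}

theorem intCast_add_mul_Yq_mem_Pideal : (c : QR n) + d * Yq n ∈ Pideal n c d :=
  Ideal.subset_span (Set.mem_insert _ _)

theorem Xq_add_one_mem_Pideal : Xq n + 1 ∈ Pideal n c d :=
  Ideal.subset_span (Set.mem_insert_of_mem _ rfl)

theorem Xq_mem_idealizer_Pideal : Xq n ∈ (Pideal n c d).idealizer := by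
  rw [Pideal, Ideal.mem_idealizer_span]
  rintro t (rfl | rfl)
  · rw [intCast_add_mul_Yq_mul_Xq]
    exact add_mem (Ideal.mul_mem_left _ _ intCast_add_mul_Yq_mem_Pideal)
      (Ideal.mul_mem_left _ _ (Ideal.mul_mem_left _ _ Xq_add_one_mem_Pideal))
  · rw [((Commute.refl (Xq n)).add_left (Commute.one_left _)).eq]
    exact Ideal.mul_mem_left _ _ Xq_add_one_mem_Pideal

theorem Yq_mem_idealizer_Pideal : Yq n ∈ (Pideal n c d).idealizer := by
  rw [Pideal, Ideal.mem_idealizer_span]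
  rintro t (rfl | rfl)
  · rw [((Int.cast_commute c _).add_left ((Int.cast_commute d _).mul_left (Commute.refl _))).eq]
    exact Ideal.mul_mem_left _ _ intCast_add_mul_Yq_mem_Pideal
  · rw [Xq_add_one_mul_Yq]
    exact Ideal.mul_mem_left _ _ Xq_add_one_mem_Pideal

end Pideal

theorem stmt0 (n : ℕ) (a b : ℤ) :
    ∀ p ∈ Pideal n a b, ∀ r : QR n, p * r ∈ Pideal n a b := by
  have hP : (Pideal n a b).idealizer = ⊤ :=
    MonoidAlgebra.subring_eq_top_of_closure_eq_top (QuaternionGroup.closure_a_one_xa_zero n)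
      (by rintro g (rfl | rfl); exacts [Xq_mem_idealizer_Pideal, Yq_mem_idealizer_Pideal])
  intro p hp r
  exact Ideal.mem_idealizer.mp (hP ▸ Subring.mem_top r) p hp
end

section
/- Let P = ⟨a+by, x+1⟩ be the left ideal of ZQ_{4n} as above, d = gcd(a,b), and k = a²+b² if n is odd, k = a²-b² if n is even, with t = k/d. Then the quotient abelian group ZQ_{4n}/P is isomorphic to Z/tZ ⊕ Z/dZ. -/
/-!
Modulo the left ideal generated by `x + 1`, right multiplication by `x` acts as `-1`, so every
group element is congruent to `±1` or `±y`. Accordingly `x ↦ -1`, `y ↦ √ε` with `ε = (-1)^n`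
(the image of `y² = xⁿ`) defines a surjective ring map `ρ : ℤQ₄ₙ → ℤ[√ε]` whose kernel is exactly
that left ideal, hence `P = ρ⁻¹(a + b√ε)` and `ℤQ₄ₙ/P ≅ ℤ[√ε]/(a + b√ε)`. Write
`a + b√ε = g(a' + b'√ε)` with `g = gcd(a, b)` and `u a' + v b' = 1`; then
`w ↦ (a' im w - b' re w mod k/g, u re w + v im w mod g)` is onto `ℤ/(k/g) × ℤ/g` with kernel the
principal ideal, where `k = a² - εb²` is the norm of `a + b√ε`.
-/

open MonoidAlgebra

namespace ZMod

variable {n : ℕ}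

def negOnePow (i : ZMod (2 * n)) : ℤˣ := (-1) ^ castHom (dvd_mul_right 2 n) (ZMod 2) i

lemma negOnePow_add (i j : ZMod (2 * n)) : negOnePow (i + j) = negOnePow i * negOnePow j := by
  rw [negOnePow, map_add, uzpow_add]; rfl

lemma negOnePow_neg (i : ZMod (2 * n)) : negOnePow (-i) = negOnePow i := by
  rw [negOnePow, map_neg, uzpow_neg, Int.units_inv_eq_self]; rfl

lemma negOnePow_natCast (m : ℕ) : negOnePow (m : ZMod (2 * n)) = (-1) ^ m := by
  rw [negOnePow, map_natCast, uzpow_natCast]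

lemma negOnePow_one : negOnePow (1 : ZMod (2 * n)) = -1 := by
  simpa using negOnePow_natCast (n := n) 1

end ZMod

open ZMod Zsqrtd

namespace QuaternionGroup

variable {n : ℕ}

lemma a_neg (i : ZMod (2 * n)) : a (-i) = (a i)⁻¹ :=
  eq_inv_of_mul_eq_one_left (by rw [a_mul_a, neg_add_cancel, a_zero])

variable (n) in
noncomputable def toZsqrtd : QuaternionGroup n →* ℤ√((-1) ^ n) where
  toFun
    | a i => ((negOnePow i : ℤ) : ℤ√((-1) ^ n))
    | xa i => ((negOnePow i : ℤ) : ℤ√((-1) ^ n)) * sqrtd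
  map_one' := by rw [one_def]; simp [negOnePow]
  map_mul' := by
    have hn : ((negOnePow (n : ZMod (2 * n)) : ℤ) : ℤ√((-1) ^ n)) = sqrtd * sqrtd := by
      rw [dmuld, negOnePow_natCast]; push_cast; rfl
    rintro (i | i) (j | j) <;>
      simp only [a_mul_a, a_mul_xa, xa_mul_a, xa_mul_xa, sub_eq_add_neg, negOnePow_add,
        negOnePow_neg, Units.val_mul, Int.cast_mul, hn] <;> ring

end QuaternionGroup

lemma Ideal.pow_sub_neg_one_pow_mem {R : Type*} [Ring R] {I : Ideal R} {x : R} (hx : x + 1 ∈ I)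
    (m : ℕ) : x ^ m - (-1) ^ m ∈ I := by
  rw [← (Commute.neg_one_right x).geom_sum₂_mul, sub_neg_eq_add]
  exact I.mul_mem_left _ hx

noncomputable def Ideal.quotientComapAddEquivOfSurjective {R S : Type*} [Ring R] [Ring S]
    (f : R →+* S) (hf : Function.Surjective f) (I : Ideal S) : (R ⧸ I.comap f) ≃+ S ⧸ I :=
  (QuotientAddGroup.quotientAddEquivOfEq
    (N := (I.mkQ.toAddMonoidHom.comp f.toAddMonoidHom).ker)
    (by ext; simp [Submodule.Quotient.mk_eq_zero])).trans
  (QuotientAddGroup.quotientKerEquivOfSurjective _ (I.mkQ_surjective.comp hf))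

lemma Int.exists_isCoprime_eq_gcd_mul (x y : ℤ) :
    ∃ a b : ℤ, IsCoprime a b ∧ x = Int.gcd x y * a ∧ y = Int.gcd x y * b := by
  rcases Nat.eq_zero_or_pos (Int.gcd x y) with h | h
  · obtain ⟨rfl, rfl⟩ := Int.gcd_eq_zero_iff.mp h
    exact ⟨1, 0, isCoprime_one_left, by simp, by simp⟩
  · obtain ⟨a, b, hab, hx, hy⟩ := Int.exists_gcd_one h
    exact ⟨a, b, Int.isCoprime_iff_gcd_eq_one.mpr hab, hx.trans (mul_comm _ _),
      hy.trans (mul_comm _ _)⟩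

namespace Zsqrtd

variable {D : ℤ}

theorem nonempty_quotient_span_addEquiv_of_isCoprime (g a b : ℤ) (hab : IsCoprime a b) :
    Nonempty ((ℤ√D ⧸ Ideal.span {(⟨g * a, g * b⟩ : ℤ√D)}) ≃+
      ZMod (g * (a ^ 2 - D * b ^ 2)).natAbs × ZMod g.natAbs) := by
  obtain ⟨u, v, huv⟩ := hab
  set m := g * (a ^ 2 - D * b ^ 2)
  let f : ℤ√D →+ ZMod m.natAbs × ZMod g.natAbs := AddMonoidHom.mk'
    (fun z => (((-b * z.re + a * z.im : ℤ) : ZMod m.natAbs),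
      ((u * z.re + v * z.im : ℤ) : ZMod g.natAbs)))
    (fun z w => by ext <;> push_cast [re_add, im_add, Prod.mk_add_mk] <;> ring)
  have hf : Function.Surjective f := by
    rintro ⟨X, Y⟩
    obtain ⟨X, rfl⟩ := ZMod.intCast_surjective X
    obtain ⟨Y, rfl⟩ := ZMod.intCast_surjective Y
    refine ⟨⟨a * Y - v * X, b * Y + u * X⟩, ?_⟩
    ext <;> simp only [f, AddMonoidHom.mk'_apply] <;> congr 1
    · linear_combination X * huv
    · linear_combination Y * huv
  have hker : f.ker = (Ideal.span {(⟨g * a, g * b⟩ : ℤ√D)}).toAddSubgroup := by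
    ext z
    simp only [f, AddMonoidHom.mem_ker, AddMonoidHom.mk'_apply, Prod.ext_iff, Prod.fst_zero,
      Prod.snd_zero, ZMod.intCast_zmod_eq_zero_iff_dvd, Int.natCast_natAbs, abs_dvd,
      Submodule.mem_toAddSubgroup, Ideal.mem_span_singleton']
    constructor
    · rintro ⟨⟨q, hq⟩, ⟨r, hr⟩⟩
      refine ⟨⟨r - q * (u * D * b + v * a), q⟩, ?_⟩
      ext <;> simp only [re_mul, im_mul]
      · linear_combination (-a) * hr + v * hq + (z.re - g * D * q * b) * huv
      · linear_combination (-b) * hr - u * hq + (z.im - g * q * a) * huv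
    · rintro ⟨w, rfl⟩
      refine ⟨⟨w.im, by simp only [re_mul, im_mul]; ring⟩,
        ⟨w.re + w.im * (u * D * b + v * a), ?_⟩⟩
      simp only [re_mul, im_mul]
      linear_combination w.re * g * huv
  exact ⟨(QuotientAddGroup.quotientAddEquivOfEq hker.symm).trans
    (QuotientAddGroup.quotientKerEquivOfSurjective f hf)⟩

theorem nonempty_quotient_span_addEquiv (z : ℤ√D) :
    Nonempty ((ℤ√D ⧸ Ideal.span {z}) ≃+
      ZMod (z.norm / Int.gcd z.re z.im).natAbs × ZMod (Int.gcd z.re z.im)) := by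
  obtain ⟨a, b, hab, hre, him⟩ := Int.exists_isCoprime_eq_gcd_mul z.re z.im
  set g := Int.gcd z.re z.im
  have hz : z = ⟨g * a, g * b⟩ := Zsqrtd.ext hre him
  have hnorm : z.norm / g = g * (a ^ 2 - D * b ^ 2) := by
    rcases eq_or_ne (g : ℤ) 0 with hg | hg
    · rw [hg, Int.ediv_zero, zero_mul]
    · rw [norm_def, hre, him, show g * a * (g * a) - D * (g * b) * (g * b) =
        g * (g * (a ^ 2 - D * b ^ 2)) by ring, Int.mul_ediv_cancel_left _ hg]
  rw [hnorm, hz]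
  simpa using nonempty_quotient_span_addEquiv_of_isCoprime (D := D) g a b hab

end Zsqrtd

open QuaternionGroup

namespace QR

variable {n : ℕ}

variable (n) in
noncomputable def toZsqrtd : QR n →ₐ[ℤ] ℤ√((-1) ^ n) :=
  MonoidAlgebra.lift ℤ _ _ (QuaternionGroup.toZsqrtd n)

lemma toZsqrtd_Xq : toZsqrtd n (Xq n) = -1 := by
  simp [toZsqrtd, Xq, QuaternionGroup.toZsqrtd, negOnePow_one]

lemma toZsqrtd_Yq : toZsqrtd n (Yq n) = sqrtd := by
  simp [toZsqrtd, Yq, QuaternionGroup.toZsqrtd, negOnePow]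

lemma of_a_sub_negOnePow_mem (i : ZMod (2 * n)) :
    of ℤ _ (a i) - ((negOnePow i : ℤ) : QR n) ∈ Ideal.span {Xq n + 1} := by
  obtain ⟨z, rfl⟩ := ZMod.intCast_surjective i
  obtain ⟨m, rfl | rfl⟩ := Int.eq_nat_or_neg z
  · rw [Int.cast_natCast, ← a_one_pow, map_pow, negOnePow_natCast]
    push_cast
    exact Ideal.pow_sub_neg_one_pow_mem (Ideal.mem_span_singleton_self _) m
  · have hinv : of ℤ (QuaternionGroup n) (a (-1)) + 1 ∈ Ideal.span {Xq n + 1} := by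
      have : of ℤ (QuaternionGroup n) (a (-1)) * (Xq n + 1) = of ℤ _ (a (-1)) + 1 := by
        rw [mul_add, mul_one, Xq, ← map_mul, a_mul_a, neg_add_cancel, a_zero, map_one, add_comm]
      exact this ▸ Ideal.mul_mem_left _ _ (Ideal.mem_span_singleton_self _)
    rw [Int.cast_neg, Int.cast_natCast, negOnePow_neg, negOnePow_natCast, a_neg, ← a_one_pow,
      ← inv_pow, ← a_neg, map_pow]
    push_cast
    exact Ideal.pow_sub_neg_one_pow_mem hinv m

lemma exists_sub_add_mul_Yq_mem (z : QR n) :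
    ∃ p q : ℤ, z - (p + q * Yq n) ∈ Ideal.span {Xq n + 1} := by
  induction z using MonoidAlgebra.induction_on with
  | of g =>
    cases g with
    | a i => exact ⟨negOnePow i, 0, by simpa using of_a_sub_negOnePow_mem i⟩
    | xa i =>
      refine ⟨0, negOnePow i, ?_⟩
      have h : of ℤ (QuaternionGroup n) (xa i) - (((0 : ℤ) : QR n) + (negOnePow i : ℤ) * Yq n) =
          Yq n * (of ℤ _ (a i) - ((negOnePow i : ℤ) : QR n)) := by
        rw [mul_sub, Yq, ← map_mul, xa_mul_a, zero_add, Int.cast_zero, zero_add, Int.cast_comm]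
      exact h ▸ Ideal.mul_mem_left _ _ (of_a_sub_negOnePow_mem i)
  | add z w hz hw =>
    obtain ⟨p, q, hz⟩ := hz
    obtain ⟨p', q', hw⟩ := hw
    refine ⟨p + p', q + q', ?_⟩
    convert add_mem hz hw using 1
    push_cast
    noncomm_ring
  | smul c z hz =>
    obtain ⟨p, q, hz⟩ := hz
    refine ⟨c * p, c * q, ?_⟩
    convert Ideal.mul_mem_left _ (c : QR n) hz using 1
    rw [zsmul_eq_mul]
    push_cast
    noncomm_ring

lemma ker_toZsqrtd : RingHom.ker (toZsqrtd n) = Ideal.span {Xq n + 1} := by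
  have hle : Ideal.span {Xq n + 1} ≤ RingHom.ker (toZsqrtd n) := by
    rw [Ideal.span_le, Set.singleton_subset_iff, SetLike.mem_coe, RingHom.mem_ker, map_add,
      toZsqrtd_Xq, map_one, neg_add_cancel]
  refine le_antisymm (fun z hz => ?_) hle
  obtain ⟨p, q, hpq⟩ := exists_sub_add_mul_Yq_mem z
  have h0 : toZsqrtd n (p + q * Yq n) = 0 := by
    have h := RingHom.mem_ker.mp (hle hpq)
    rwa [map_sub, RingHom.mem_ker.mp hz, zero_sub, neg_eq_zero] at h
  obtain ⟨rfl, rfl⟩ : p = 0 ∧ q = 0 := by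
    simpa [toZsqrtd_Yq, Zsqrtd.ext_iff] using h0
  simpa using hpq

lemma toZsqrtd_surjective : Function.Surjective (toZsqrtd n) := fun z =>
  ⟨z.re + z.im * Yq n, by ext <;> simp [toZsqrtd_Yq]⟩

lemma Pideal_eq_comap (a b : ℤ) :
    Pideal n a b = (Ideal.span {(⟨a, b⟩ : ℤ√((-1) ^ n))}).comap (toZsqrtd n) := by
  have hgen : toZsqrtd n (a + b * Yq n) = ⟨a, b⟩ := by
    ext <;> simp [toZsqrtd_Yq]
  rw [Pideal, Ideal.span_insert, ← ker_toZsqrtd, ← hgen, ← Set.image_singleton (f := toZsqrtd n),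
    ← Ideal.map_span, Ideal.comap_map_of_surjective _ toZsqrtd_surjective]
  rfl

end QR

theorem stmt1 (n : ℕ) (a b : ℤ)
    (k : ℤ) (hk : k = if Odd n then a ^ 2 + b ^ 2 else a ^ 2 - b ^ 2)
    (d : ℕ) (hd : d = Int.gcd a b)
    (t : ℕ) (ht : t = (k / (d : ℤ)).natAbs) :
    Nonempty ((QR n ⧸ Pideal n a b) ≃+ (ZMod t × ZMod d)) := by
  have hnorm : k = (⟨a, b⟩ : ℤ√((-1) ^ n)).norm := by
    rcases Nat.even_or_odd n with hn | hn
    · simp [hk, norm_def, hn.neg_one_pow, Nat.not_odd_iff_even.mpr hn, sq]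
    · simp [hk, norm_def, hn.neg_one_pow, hn, sq]
  subst hd ht hnorm
  rw [QR.Pideal_eq_comap]
  obtain ⟨e⟩ := Zsqrtd.nonempty_quotient_span_addEquiv (⟨a, b⟩ : ℤ√((-1) ^ n))
  exact ⟨(Ideal.quotientComapAddEquivOfSurjective _ QR.toZsqrtd_surjective _).trans e⟩
end

section
/- Let n be odd and gcd(a²+b², 2n) = 1. Then the ideal P = ⟨a+by, x+1⟩ of ZQ_{4n} contains an element of augmentation 1, and consequently N·P = ⟨N⟩, where N is the sum of all group elements of Q_{4n}. -/
open MonoidAlgebra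

/-- the norm element: sum of all group elements -/
noncomputable def Nelt (n : ℕ) [NeZero n] : QR n :=
  ∑ g : QuaternionGroup n, of ℤ (QuaternionGroup n) g

/-- the augmentation map -/
noncomputable def aug (n : ℕ) : QR n →+* ℤ :=
  ((MonoidAlgebra.lift ℤ ℤ (QuaternionGroup n)) 1).toRingHom

/-!
The norm element `N` of a finite group ring absorbs group elements on either side, so
`r * N = N * r = ε(r) • N`. Hence `N * P ⊆ ⟨N⟩` for every ideal `P`, and equality holds as soon as
`P` contains some `p₁` with `ε(p₁) = 1`, because then `ε(r) • N = N * (ε(r) • p₁)`.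
For `P = ⟨a + b y, x + 1⟩` the augmentations of the generators are `a + b` and `2`, and
`a + b ≡ a² + b² (mod 2)` is odd since `a² + b²` is prime to `2n`.
-/

namespace MonoidAlgebra

variable {k G : Type*} [CommSemiring k] [Group G] [Fintype G]

theorem of_mul_sum_of (g : G) : of k G g * ∑ h : G, of k G h = ∑ h : G, of k G h := by
  rw [Finset.mul_sum]
  exact Fintype.sum_equiv (Equiv.mulLeft g) _ _ fun h => (map_mul (of k G) g h).symm

theorem sum_of_mul_of (g : G) : (∑ h : G, of k G h) * of k G g = ∑ h : G, of k G h := by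
  rw [Finset.sum_mul]
  exact Fintype.sum_equiv (Equiv.mulRight g) _ _ fun h => (map_mul (of k G) h g).symm

theorem mul_sum_of (r : MonoidAlgebra k G) :
    r * ∑ h : G, of k G h = lift k k G 1 r • ∑ h : G, of k G h := by
  induction r using MonoidAlgebra.induction_on with
  | of g => rw [of_mul_sum_of, lift_of, MonoidHom.one_apply, one_smul]
  | add f g hf hg => rw [add_mul, hf, hg, map_add, add_smul]
  | smul c f hf => rw [smul_mul_assoc, hf, map_smul, smul_assoc]

theorem sum_of_mul (r : MonoidAlgebra k G) :
    (∑ h : G, of k G h) * r = lift k k G 1 r • ∑ h : G, of k G h := by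
  induction r using MonoidAlgebra.induction_on with
  | of g => rw [sum_of_mul_of, lift_of, MonoidHom.one_apply, one_smul]
  | add f g hf hg => rw [mul_add, hf, hg, map_add, add_smul]
  | smul c f hf => rw [mul_smul_comm, hf, map_smul, smul_assoc]

theorem exists_eq_sum_of_mul_iff_mem_span {I : Ideal (MonoidAlgebra k G)}
    {p₁ : MonoidAlgebra k G} (hp₁ : p₁ ∈ I) (hε : lift k k G 1 p₁ = 1) (z : MonoidAlgebra k G) :
    (∃ p ∈ I, z = (∑ h : G, of k G h) * p) ↔ z ∈ Ideal.span {∑ h : G, of k G h} := by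
  rw [Ideal.mem_span_singleton']
  constructor
  · rintro ⟨p, -, rfl⟩
    exact ⟨lift k k G 1 p • 1, by rw [smul_one_mul, sum_of_mul]⟩
  · rintro ⟨r, rfl⟩
    refine ⟨lift k k G 1 r • p₁, I.smul_of_tower_mem _ hp₁, ?_⟩
    rw [mul_smul_comm, sum_of_mul, hε, one_smul, mul_sum_of]

end MonoidAlgebra

theorem Int.odd_of_gcd_two_mul_eq_one {m k : ℤ} (h : Int.gcd m (2 * k) = 1) : Odd m := by
  rw [← Int.not_even_iff_odd, even_iff_two_dvd]
  intro h2
  have : (2 : ℤ) ∣ 1 := by exact_mod_cast h ▸ Int.dvd_gcd h2 (dvd_mul_right 2 k)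
  omega

theorem Int.odd_sq_add_sq_iff (a b : ℤ) : Odd (a ^ 2 + b ^ 2) ↔ Odd (a + b) := by
  simp only [Int.odd_add, Int.odd_pow' two_ne_zero, Int.even_pow' two_ne_zero]

theorem exists_mem_Pideal_aug_eq_one (n : ℕ) {a b : ℤ} (hab : Odd (a + b)) :
    ∃ p ∈ Pideal n a b, aug n p = 1 := by
  obtain ⟨k, hk⟩ := hab
  have hgen₁ : (a : QR n) + (b : QR n) * Yq n ∈ Pideal n a b := Ideal.subset_span (by simp)
  have hgen₂ : Xq n + 1 ∈ Pideal n a b := Ideal.subset_span (by simp)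
  refine ⟨_, Ideal.add_mem _ hgen₁ (Ideal.mul_mem_left _ ((-k : ℤ) : QR n) hgen₂), ?_⟩
  simp only [aug, Xq, Yq, AlgHom.toRingHom_eq_coe, RingHom.coe_coe, map_add, map_mul, map_intCast,
    map_one, lift_of, MonoidHom.one_apply]
  push_cast
  omega

theorem stmt5_general (n : ℕ) [NeZero n] (a b : ℤ)
    (hco : Int.gcd (a ^ 2 + b ^ 2) (2 * n) = 1) :
    (∃ p ∈ Pideal n a b, aug n p = 1) ∧
    (∀ z : QR n, (∃ p ∈ Pideal n a b, z = Nelt n * p) ↔ z ∈ Ideal.span {Nelt n}) := by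
  have hab : Odd (a + b) := (Int.odd_sq_add_sq_iff a b).1 (Int.odd_of_gcd_two_mul_eq_one hco)
  obtain ⟨p₁, hp₁, hε⟩ := exists_mem_Pideal_aug_eq_one n hab
  exact ⟨⟨p₁, hp₁, hε⟩, MonoidAlgebra.exists_eq_sum_of_mul_iff_mem_span hp₁ hε⟩

theorem stmt5 (n : ℕ) [NeZero n] (a b : ℤ) (hn : Odd n)
    (hco : Int.gcd (a ^ 2 + b ^ 2) (2 * n) = 1) :
    (∃ p ∈ Pideal n a b, aug n p = 1) ∧
    (∀ z : QR n, (∃ p ∈ Pideal n a b, z = Nelt n * p) ↔ z ∈ Ideal.span {Nelt n}) :=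
  stmt5_general n a b hco
end

section
/- Let n be odd, gcd(a²+b², 2n)=1, and P = ⟨a+by, x+1⟩ ⊆ ZQ_{4n}. Then P/⟨x^n+1⟩P is isomorphic as a module over ZQ_{4n}/⟨x^n+1⟩ to the pullback module {(e,f) ∈ ZQ_{4n}/⟨ψ_{2n}⟩ ⊕ ZQ_{4n}/⟨x+1⟩ : ē = (a+by)·f̄ in Z_n[y]/⟨y²+1⟩}. -/
open MonoidAlgebra Polynomial

/-- `ψ_{2n} = 1 - x + x² - ⋯ + x^{n-1}` -/
noncomputable def psi (n : ℕ) : QR n := ∑ k ∈ Finset.range n, (-1 : QR n) ^ k * Xq n ^ k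

/-- `⟨xⁿ+1⟩P`, as a submodule of `P` -/
noncomputable def xnP (n : ℕ) (a b : ℤ) : Submodule (QR n) (Pideal n a b) :=
  Submodule.comap (Pideal n a b).subtype
    (Submodule.span (QR n) ((fun w => (Xq n ^ n + 1) * w) '' (Pideal n a b : Set (QR n))))

/-- `Z_n[y]/⟨y²+1⟩` -/
abbrev Sn (n : ℕ) : Type := Polynomial (ZMod n) ⧸ Ideal.span {(X : Polynomial (ZMod n)) ^ 2 + 1}

/-!
Write `g = a + b y`, `z = xⁿ + 1` and `I = ℤQ_{4n} (x + 1)`. For odd `n`, sending `x ↦ -1`,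
`y ↦ i` identifies `ℤQ_{4n} / I` with `ℤ[i]`, and `g ↦ a + b i ≠ 0`; so right multiplication by
`g` is injective on `ℤQ_{4n} / I`, and `ρ = r g + s (x + 1) ∈ P` determines `r` modulo `I`.
Then `ρ ↦ (ρ mod ψ, r mod I)` is linear on `P`; its image consists of the pairs `(e, f)` with
`e - f g ∈ ⟨ψ⟩ + I = ker φ`, and its kernel is `P ∩ ⟨ψ⟩ ∩ I = P ∩ ⟨z⟩`, because `z = ψ (x + 1)`
is central, `ψ ≡ n` modulo `x + 1`, `z (xⁿ - 1) = 0` and `n` is odd. Finally `⟨z⟩ P = ⟨z⟩`,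
since `u (a² + b²) + 2 v = 1` yields `π ∈ P` with `z π = z`.
-/

section DivisionInQuotient

variable {R : Type*} [Ring R] (I L : Ideal R) {g : R} (hg : ∀ r, r * g ∈ I ↔ r ∈ I)

lemma exists_sub_mul_mem_of_mem_span_sup {ρ : R} (hρ : ρ ∈ Ideal.span {g} ⊔ I) :
    ∃ r, ρ - r * g ∈ I := by
  obtain ⟨s, hs, i, hi, rfl⟩ := Submodule.mem_sup.1 hρ
  obtain ⟨r, rfl⟩ := Ideal.mem_span_singleton'.1 hs
  exact ⟨r, by simpa using hi⟩

noncomputable def quotMulRight : (R ⧸ I) →ₗ[R] R ⧸ I :=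
  I.liftQ (I.mkQ ∘ₗ LinearMap.toSpanSingleton R R g) fun r hr => by
    simpa [Submodule.Quotient.mk_eq_zero] using (hg r).2 hr

lemma quotMulRight_mk (r : R) :
    quotMulRight I hg (Submodule.Quotient.mk r) = Submodule.Quotient.mk (r * g) := rfl

lemma quotMulRight_injective : Function.Injective (quotMulRight I hg) := by
  rw [← LinearMap.ker_eq_bot, eq_bot_iff]
  intro q hq
  induction q using Submodule.Quotient.induction_on with
  | H r =>
    rw [LinearMap.mem_ker, quotMulRight_mk, Submodule.Quotient.mk_eq_zero, hg] at hq
    exact (Submodule.Quotient.mk_eq_zero I).2 hq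

variable {I} {J : Ideal R} (hJ : J = Ideal.span {g} ⊔ I)

noncomputable def quotDivRight : J →ₗ[R] R ⧸ I :=
  (LinearEquiv.ofInjective _ (quotMulRight_injective I hg)).symm.toLinearMap ∘ₗ
    LinearMap.codRestrict (LinearMap.range (quotMulRight I hg)) (I.mkQ ∘ₗ J.subtype) fun ρ => by
      obtain ⟨r, hr⟩ := exists_sub_mul_mem_of_mem_span_sup I (hJ.le ρ.2)
      exact ⟨Submodule.Quotient.mk r, (Submodule.Quotient.eq I).2 (by simpa using neg_mem hr)⟩

lemma quotMulRight_quotDivRight (ρ : J) :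
    quotMulRight I hg (quotDivRight hg hJ ρ) = Submodule.Quotient.mk (ρ : R) :=
  congrArg Subtype.val
    ((LinearEquiv.ofInjective _ (quotMulRight_injective I hg)).apply_symm_apply _)

lemma quotDivRight_eq_mk {ρ : J} {r : R} (h : (ρ : R) - r * g ∈ I) :
    quotDivRight hg hJ ρ = Submodule.Quotient.mk r := by
  apply quotMulRight_injective I hg
  rw [quotMulRight_quotDivRight, quotMulRight_mk]
  exact (Submodule.Quotient.eq I).2 h

lemma quotDivRight_eq_zero_iff {ρ : J} : quotDivRight hg hJ ρ = 0 ↔ (ρ : R) ∈ I := by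
  rw [← (quotMulRight_injective I hg).eq_iff, quotMulRight_quotDivRight, map_zero,
    Submodule.Quotient.mk_eq_zero]

noncomputable def pullbackMap : J →ₗ[R] (R ⧸ L) × (R ⧸ I) :=
  (L.mkQ ∘ₗ J.subtype).prod (quotDivRight hg hJ)

lemma ker_pullbackMap :
    LinearMap.ker (pullbackMap L hg hJ) = Submodule.comap J.subtype (L ⊓ I) := by
  ext ρ
  simp [pullbackMap, Submodule.Quotient.mk_eq_zero, quotDivRight_eq_zero_iff]

lemma range_pullbackMap :
    (LinearMap.range (pullbackMap L hg hJ) : Set ((R ⧸ L) × (R ⧸ I))) =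
      {ef | ∃ e f : R, Submodule.Quotient.mk e = ef.1 ∧ Submodule.Quotient.mk f = ef.2 ∧
        e - f * g ∈ L ⊔ I} := by
  ext ef
  constructor
  · rintro ⟨ρ, rfl⟩
    obtain ⟨r, hr⟩ := exists_sub_mul_mem_of_mem_span_sup I (hJ.le ρ.2)
    exact ⟨ρ, r, rfl, (quotDivRight_eq_mk hg hJ hr).symm, Submodule.mem_sup_right hr⟩
  · rintro ⟨e, f, he, hf, h⟩
    obtain ⟨l, hl, i, hi, hli⟩ := Submodule.mem_sup.1 h
    have hρ : f * g + i ∈ J := hJ.ge <| add_mem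
      (Submodule.mem_sup_left (Ideal.mul_mem_left _ _ (Ideal.mem_span_singleton_self g)))
      (Submodule.mem_sup_right hi)
    refine ⟨⟨f * g + i, hρ⟩, Prod.ext (he ▸ (Submodule.Quotient.eq L).2 ?_)
      (hf ▸ quotDivRight_eq_mk hg hJ ?_)⟩
    · convert neg_mem hl using 1
      simp only [Submodule.subtype_apply]
      rw [eq_sub_of_add_eq hli]
      abel
    · simpa using hi

end DivisionInQuotient

lemma eq_zero_of_mk_C_add_C_mul_X_eq_zero {R : Type*} [CommRing R] {p q : R}
    (h : Ideal.Quotient.mk (Ideal.span {X ^ 2 + 1}) (C p + C q * X) = 0) : p = 0 ∧ q = 0 := by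
  nontriviality R
  have hX : (X ^ 2 + 1 : R[X]) = X ^ 2 + C 1 := by rw [C_1]
  have h0 : C p + C q * X = 0 := by
    by_contra h0
    refine AdjoinRoot.mk_ne_zero_of_natDegree_lt (f := X ^ 2 + 1)
      (hX ▸ monic_X_pow_add_C 1 two_ne_zero) h0 ?_ h
    rw [hX, natDegree_X_pow_add_C, add_comm]
    exact natDegree_linear_le.trans_lt one_lt_two
  exact ⟨by simpa using congrArg (Polynomial.coeff · 0) h0,
    by simpa using congrArg (Polynomial.coeff · 1) h0⟩

instance {k G : Type*} [Semiring k] [IsAddTorsionFree k] : IsAddTorsionFree (MonoidAlgebra k G) :=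
  MonoidAlgebra.coeff_injective.isAddTorsionFree MonoidAlgebra.coeffAddEquiv.toAddMonoidHom

section QuaternionGroupAlgebra

variable {n : ℕ}

lemma Xq_pow (k : ℕ) : Xq n ^ k = of ℤ _ (QuaternionGroup.a k) := by
  induction k with
  | zero => rw [pow_zero, Nat.cast_zero, ← QuaternionGroup.one_def, map_one]
  | succ k ih => rw [pow_succ, ih, Xq, ← map_mul, QuaternionGroup.a_mul_a, Nat.cast_succ]

lemma of_a_eq_Xq_pow [NeZero n] (i : ZMod (2 * n)) :
    of ℤ _ (QuaternionGroup.a i) = Xq n ^ i.val := by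
  rw [Xq_pow, ZMod.natCast_zmod_val]

lemma of_xa_eq_Yq_mul (i : ZMod (2 * n)) :
    of ℤ _ (QuaternionGroup.xa i) = Yq n * of ℤ _ (QuaternionGroup.a i) := by
  rw [Yq, ← map_mul, QuaternionGroup.xa_mul_a, zero_add]

lemma Yq_mul_Yq : Yq n * Yq n = Xq n ^ n := by
  rw [Yq, ← map_mul, QuaternionGroup.xa_mul_xa, Xq_pow, sub_zero, add_zero]

lemma Xq_pow_n_add_one_mul_Xq_pow_n : (Xq n ^ n + 1) * Xq n ^ n = Xq n ^ n + 1 := by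
  rw [add_mul, ← pow_add, Xq_pow, ← two_mul, ZMod.natCast_self, ← QuaternionGroup.one_def, map_one,
    one_mul, add_comm]

lemma commute_Xq_pow_n (r : QR n) : Commute (Xq n ^ n) r := by
  induction r using MonoidAlgebra.induction_on with
  | of σ =>
    rw [Xq_pow, Commute, SemiconjBy, ← map_mul, ← map_mul]
    congr 1
    rcases σ with i | i
    · simp [add_comm]
    · have : (n : ZMod (2 * n)) + n = 0 := by
        rw [← two_mul]; exact_mod_cast ZMod.natCast_self (2 * n)
      simp only [QuaternionGroup.a_mul_xa, QuaternionGroup.xa_mul_a, QuaternionGroup.xa.injEq]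
      linear_combination -this
  | add f g hf hg => exact hf.add_right hg
  | smul r f hf => exact hf.smul_right r

lemma commute_Xq_pow_n_add_one (r : QR n) : Commute (Xq n ^ n + 1) r :=
  (commute_Xq_pow_n r).add_left (Commute.one_left r)

lemma pow_sub_neg_one_pow_mem_span (k : ℕ) : Xq n ^ k - (-1) ^ k ∈ Ideal.span {Xq n + 1} :=
  Ideal.mem_span_singleton'.2 ⟨_, by
    simpa using ((Commute.neg_one_right (Xq n)).geom_sum₂_mul k)⟩

lemma psi_eq_geom_sum : psi n = ∑ k ∈ Finset.range n, (-Xq n) ^ k := by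
  unfold psi
  exact Finset.sum_congr rfl fun k _ => (neg_pow _ _).symm

lemma X_add_one_dvd_psi_sub_natCast : Xq n + 1 ∣ psi n - n := by
  have hn : (n : QR n) = ∑ _k ∈ Finset.range n, 1 := by simp
  rw [psi_eq_geom_sum, hn, ← Finset.sum_sub_distrib]
  refine Finset.dvd_sum fun k _ => ?_
  have h := (Commute.one_right (-Xq n)).sub_dvd_pow_sub_pow k
  rwa [one_pow, show -Xq n - 1 = -(Xq n + 1) by abel, neg_dvd] at h

lemma psi_mul_X_add_one (hn : Odd n) : psi n * (Xq n + 1) = Xq n ^ n + 1 := by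
  have h := geom_sum_mul (-Xq n) n
  rw [← psi_eq_geom_sum, hn.neg_pow, show -Xq n - 1 = -(Xq n + 1) by abel, mul_neg] at h
  exact neg_injective (h.trans (by abel))

lemma X_add_one_mul_psi (hn : Odd n) : (Xq n + 1) * psi n = Xq n ^ n + 1 := by
  have h := mul_geom_sum (-Xq n) n
  rw [← psi_eq_geom_sum, hn.neg_pow, show -Xq n - 1 = -(Xq n + 1) by abel, neg_mul] at h
  exact neg_injective (h.trans (by abel))

def negOnePowZMod (i : ZMod (2 * n)) : ℤˣ := (-1) ^ ZMod.castHom (dvd_mul_right 2 n) (ZMod 2) i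

lemma negOnePowZMod_add (i j : ZMod (2 * n)) :
    negOnePowZMod (i + j) = negOnePowZMod i * negOnePowZMod j := by
  simp only [negOnePowZMod, map_add, uzpow_add]

lemma negOnePowZMod_sub (i j : ZMod (2 * n)) :
    negOnePowZMod (i - j) = negOnePowZMod i * negOnePowZMod j := by
  simp only [negOnePowZMod, map_sub, uzpow_sub, div_eq_mul_inv, Int.units_inv_eq_self]

lemma negOnePowZMod_zero : negOnePowZMod (0 : ZMod (2 * n)) = 1 := by
  simp only [negOnePowZMod, map_zero, uzpow_zero]

lemma negOnePowZMod_one : negOnePowZMod (1 : ZMod (2 * n)) = -1 := by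
  simp only [negOnePowZMod, map_one, uzpow_one]

lemma negOnePowZMod_natCast (k : ℕ) : negOnePowZMod (k : ZMod (2 * n)) = (-1) ^ k := by
  simp only [negOnePowZMod, map_natCast, uzpow_natCast]

/-- `x ↦ -1`, `y ↦ i`: multiplicative because for odd `n` the relation `y² = xⁿ` goes to
`i² = -1`. -/
def QuaternionGroup.toGaussianInt (hn : Odd n) : QuaternionGroup n →* GaussianInt where
  toFun
    | .a i => ((negOnePowZMod i : ℤ) : GaussianInt)
    | .xa i => ((negOnePowZMod i : ℤ) : GaussianInt) * Zsqrtd.sqrtd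
  map_one' := by
    rw [QuaternionGroup.one_def]
    simp [negOnePowZMod_zero]
  map_mul' := by
    have hsq : (Zsqrtd.sqrtd : GaussianInt) * Zsqrtd.sqrtd = -1 := by simp [Zsqrtd.dmuld]
    rintro (i | i) (j | j) <;>
      simp only [QuaternionGroup.a_mul_a, QuaternionGroup.a_mul_xa, QuaternionGroup.xa_mul_a,
        QuaternionGroup.xa_mul_xa, add_sub_assoc, negOnePowZMod_add, negOnePowZMod_sub,
        negOnePowZMod_natCast, hn.neg_one_pow, Units.val_mul, Units.val_neg, Units.val_one,
        Int.cast_mul, Int.cast_neg, Int.cast_one]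
    · ring
    · ring
    · rw [mul_mul_mul_comm, hsq]
      ring

noncomputable def toGaussianInt (hn : Odd n) : QR n →ₐ[ℤ] GaussianInt :=
  MonoidAlgebra.lift ℤ GaussianInt _ (QuaternionGroup.toGaussianInt hn)

lemma toGaussianInt_Xq (hn : Odd n) : toGaussianInt hn (Xq n) = -1 := by
  simp [toGaussianInt, Xq, QuaternionGroup.toGaussianInt, negOnePowZMod_one]

lemma toGaussianInt_Yq (hn : Odd n) : toGaussianInt hn (Yq n) = Zsqrtd.sqrtd := by
  simp [toGaussianInt, Yq, QuaternionGroup.toGaussianInt, negOnePowZMod_zero]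

lemma mem_span_X_add_one_sup_span_one_Yq [NeZero n] (r : QR n) :
    r ∈ (Ideal.span {Xq n + 1}).restrictScalars ℤ ⊔ Submodule.span ℤ {1, Yq n} := by
  induction r using MonoidAlgebra.induction_on with
  | of σ =>
    rcases σ with i | i
    · rw [of_a_eq_Xq_pow, ← sub_add_cancel (Xq n ^ i.val) ((-1) ^ i.val)]
      refine add_mem (Submodule.mem_sup_left (pow_sub_neg_one_pow_mem_span i.val))
        (Submodule.mem_sup_right ?_)
      exact Submodule.mem_span_pair.2 ⟨(-1) ^ i.val, 0, by simp⟩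
    · rw [of_xa_eq_Yq_mul, of_a_eq_Xq_pow, ← sub_add_cancel (Xq n ^ i.val) ((-1) ^ i.val), mul_add]
      refine add_mem (Submodule.mem_sup_left (Ideal.mul_mem_left _ _
        (pow_sub_neg_one_pow_mem_span i.val))) (Submodule.mem_sup_right ?_)
      exact Submodule.mem_span_pair.2 ⟨0, (-1) ^ i.val, by
        simp [zsmul_eq_mul, ((Commute.neg_one_right _).pow_right _).eq]⟩
  | add f g hf hg => exact add_mem hf hg
  | smul r f hf => exact Submodule.smul_mem _ r hf

lemma exists_sub_mem_span_X_add_one [NeZero n] (r : QR n) :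
    ∃ u v : ℤ, r - (u • 1 + v • Yq n) ∈ Ideal.span {Xq n + 1} := by
  obtain ⟨i, hi, s, hs, rfl⟩ := Submodule.mem_sup.1 (mem_span_X_add_one_sup_span_one_Yq r)
  obtain ⟨u, v, rfl⟩ := Submodule.mem_span_pair.1 hs
  exact ⟨u, v, by simpa using hi⟩

lemma mem_span_X_add_one_iff (hn : Odd n) {r : QR n} :
    r ∈ Ideal.span {Xq n + 1} ↔ toGaussianInt hn r = 0 := by
  have : NeZero n := ⟨hn.pos.ne'⟩
  have hker {s : QR n} (hs : s ∈ Ideal.span {Xq n + 1}) : toGaussianInt hn s = 0 := by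
    obtain ⟨c, rfl⟩ := Ideal.mem_span_singleton'.1 hs
    simp [toGaussianInt_Xq]
  refine ⟨hker, fun hr => ?_⟩
  obtain ⟨u, v, h⟩ := exists_sub_mem_span_X_add_one r
  have huv := hker h
  rw [map_sub, hr, zero_sub, neg_eq_zero, map_add, map_zsmul, map_zsmul, map_one,
    toGaussianInt_Yq] at huv
  obtain ⟨rfl, rfl⟩ : u = 0 ∧ v = 0 := by simpa [Zsqrtd.ext_iff] using huv
  simpa using h

lemma mem_span_X_add_one_of_dvd (hn : Odd n) {r : QR n} (h : Xq n + 1 ∣ r) :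
    r ∈ Ideal.span {Xq n + 1} := by
  obtain ⟨c, rfl⟩ := h
  rw [mem_span_X_add_one_iff hn, map_mul, map_add, toGaussianInt_Xq, map_one, neg_add_cancel,
    zero_mul]

lemma toGaussianInt_intCast_add_mul_Yq (hn : Odd n) (a b : ℤ) :
    toGaussianInt hn ((a : QR n) + b * Yq n) = ⟨a, b⟩ := by
  ext <;> simp [toGaussianInt_Yq]

lemma mul_mem_span_X_add_one_iff (hn : Odd n) {g : QR n} (hg : toGaussianInt hn g ≠ 0) (r : QR n) :
    r * g ∈ Ideal.span {Xq n + 1} ↔ r ∈ Ideal.span {Xq n + 1} := by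
  simp [mem_span_X_add_one_iff hn, hg]

lemma mem_span_Xq_pow_n_add_one_of_nsmul_mem (hn : Odd n) {ρ : QR n}
    (h : n • ρ ∈ Ideal.span {Xq n ^ n + 1}) : ρ ∈ Ideal.span {Xq n ^ n + 1} := by
  obtain ⟨w, hw⟩ := Ideal.mem_span_singleton'.1 h
  have hρ : ρ * Xq n ^ n = ρ := by
    refine sub_eq_zero.1 (nsmul_right_injective hn.pos.ne' ?_)
    show n • (ρ * Xq n ^ n - ρ) = n • 0
    rw [smul_zero, smul_sub, ← smul_mul_assoc, ← hw, mul_assoc, Xq_pow_n_add_one_mul_Xq_pow_n,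
      sub_self]
  -- so `ρ z = 2 ρ`, and `ρ = (m + 1) • ρ z - n • ρ`
  obtain ⟨m, rfl⟩ := hn
  refine Ideal.mem_span_singleton'.2 ⟨(m + 1) • ρ - w, ?_⟩
  rw [sub_mul, smul_mul_assoc, mul_add, hρ, mul_one, hw]
  module

lemma span_psi_inf_span_X_add_one (hn : Odd n) :
    Ideal.span {psi n} ⊓ Ideal.span {Xq n + 1} = Ideal.span {Xq n ^ n + 1} := by
  apply le_antisymm
  · rintro ρ ⟨hψ, hx⟩
    obtain ⟨u, rfl⟩ := Ideal.mem_span_singleton'.1 hψ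
    obtain ⟨t, ht⟩ := Ideal.mem_span_singleton'.1 hx
    obtain ⟨c, hc⟩ := X_add_one_dvd_psi_sub_natCast (n := n)
    refine mem_span_Xq_pow_n_add_one_of_nsmul_mem hn (Ideal.mem_span_singleton'.2 ⟨t - u * c, ?_⟩)
    calc (t - u * c) * (Xq n ^ n + 1)
        = t * (Xq n + 1) * psi n - u * (psi n * (Xq n + 1)) * c := by
          rw [mul_assoc t, X_add_one_mul_psi hn, psi_mul_X_add_one hn, sub_mul, mul_assoc u c,
            mul_assoc u, (commute_Xq_pow_n_add_one c).eq]
      _ = u * psi n * (psi n - (Xq n + 1) * c) := by rw [ht]; noncomm_ring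
      _ = n • (u * psi n) := by
          rw [← hc, sub_sub_cancel, nsmul_eq_mul, (Nat.cast_commute _ _).eq]
  · rw [Ideal.span_le, Set.singleton_subset_iff]
    exact ⟨Ideal.mem_span_singleton'.2 ⟨Xq n + 1, X_add_one_mul_psi hn⟩,
      Ideal.mem_span_singleton'.2 ⟨psi n, psi_mul_X_add_one hn⟩⟩

section Pideal

variable {a b u v : ℤ}

lemma intCast_sub_mul_Yq_mul_intCast_add_mul_Yq :
    ((a : QR n) - b * Yq n) * (a + b * Yq n) = (a ^ 2) • 1 - (b ^ 2) • Xq n ^ n := by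
  rw [← Yq_mul_Yq]
  simp only [← zsmul_one, smul_mul_assoc, mul_smul_comm, one_mul, mul_one, sub_mul, mul_add]
  module

lemma exists_mem_Pideal_mul_eq (hn : Odd n) (hsol : u * (a ^ 2 + b ^ 2) + v * 2 = 1) :
    ∃ π ∈ Pideal n a b, (Xq n ^ n + 1) * π = Xq n ^ n + 1 := by
  have hg : (a : QR n) + b * Yq n ∈ Pideal n a b := Ideal.subset_span (Set.mem_insert _ _)
  have hx : Xq n + 1 ∈ Pideal n a b := Ideal.subset_span (Set.mem_insert_of_mem _ rfl)
  refine ⟨u • (((a : QR n) - b * Yq n) * (a + b * Yq n)) + (u * b ^ 2 + v) • (psi n * (Xq n + 1)),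
    add_mem (Submodule.smul_of_tower_mem _ _ (Ideal.mul_mem_left _ _ hg))
      (Submodule.smul_of_tower_mem _ _ (Ideal.mul_mem_left _ _ hx)), ?_⟩
  rw [intCast_sub_mul_Yq_mul_intCast_add_mul_Yq, psi_mul_X_add_one hn]
  simp only [mul_add, mul_sub, mul_smul_comm, mul_one, Xq_pow_n_add_one_mul_Xq_pow_n]
  conv_rhs => rw [← one_smul ℤ (Xq n ^ n + 1), ← hsol]
  module

lemma xnP_eq (hn : Odd n) (hsol : u * (a ^ 2 + b ^ 2) + v * 2 = 1) :
    xnP n a b = Submodule.comap (Pideal n a b).subtype (Ideal.span {Xq n ^ n + 1}) := by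
  rw [xnP]
  congr 1
  apply le_antisymm
  · rw [Submodule.span_le]
    rintro _ ⟨w, -, rfl⟩
    exact Ideal.mem_span_singleton'.2 ⟨w, (commute_Xq_pow_n_add_one w).eq.symm⟩
  · obtain ⟨π, hπ, hzπ⟩ := exists_mem_Pideal_mul_eq hn hsol
    rw [Ideal.span_le, Set.singleton_subset_iff]
    exact Submodule.subset_span ⟨π, hπ, hzπ⟩

end Pideal

lemma mem_span_psi_sup_span_X_add_one_iff (hn : Odd n) {φ : QR n →+* Sn n} (hφx : φ (Xq n) = -1)
    (hφy : φ (Yq n) = Ideal.Quotient.mk _ (X : Polynomial (ZMod n))) {r : QR n} :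
    r ∈ Ideal.span {psi n} ⊔ Ideal.span {Xq n + 1} ↔ φ r = 0 := by
  have : NeZero n := ⟨hn.pos.ne'⟩
  have hψ : φ (psi n) = 0 := by
    have hchar : ((n : ℕ) : Sn n) = 0 := by
      rw [← map_natCast (Ideal.Quotient.mk _), ← map_natCast C, ZMod.natCast_self, map_zero,
        map_zero]
    simp [psi_eq_geom_sum, hφx, hchar]
  have hker {s : QR n} (hs : s ∈ Ideal.span {psi n} ⊔ Ideal.span {Xq n + 1}) : φ s = 0 := by
    obtain ⟨s₁, h₁, s₂, h₂, rfl⟩ := Submodule.mem_sup.1 hs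
    obtain ⟨c₁, rfl⟩ := Ideal.mem_span_singleton'.1 h₁
    obtain ⟨c₂, rfl⟩ := Ideal.mem_span_singleton'.1 h₂
    simp [hψ, hφx]
  refine ⟨hker, fun hr => ?_⟩
  obtain ⟨u, v, h⟩ := exists_sub_mem_span_X_add_one r
  have huv := hker (Submodule.mem_sup_right h)
  rw [map_sub, hr, zero_sub, neg_eq_zero, map_add, map_zsmul, map_zsmul, map_one, hφy] at huv
  obtain ⟨⟨u', rfl⟩, ⟨v', rfl⟩⟩ : (n : ℤ) ∣ u ∧ (n : ℤ) ∣ v := by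
    simp only [← ZMod.intCast_zmod_eq_zero_iff_dvd]
    exact eq_zero_of_mk_C_add_C_mul_X_eq_zero (by simpa [zsmul_eq_mul] using huv)
  have hn_mem : (n : QR n) ∈ Ideal.span {psi n} ⊔ Ideal.span {Xq n + 1} := by
    rw [← sub_sub_cancel (psi n) n]
    exact sub_mem (Submodule.mem_sup_left (Ideal.mem_span_singleton_self _))
      (Submodule.mem_sup_right (mem_span_X_add_one_of_dvd hn X_add_one_dvd_psi_sub_natCast))
  rw [← sub_add_cancel r ((n * u') • 1 + (n * v') • Yq n)]
  refine add_mem (Submodule.mem_sup_right h) ?_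
  convert Ideal.mul_mem_left _ (u' • 1 + v' • Yq n) hn_mem using 1
  rw [← nsmul_eq_mul']
  module

end QuaternionGroupAlgebra

/-- `P/⟨xⁿ+1⟩P` is isomorphic over `ℤQ_{4n}/⟨xⁿ+1⟩` to the pullback module
`{(e,f) ∈ ℤQ_{4n}/⟨ψ_{2n}⟩ ⊕ ℤQ_{4n}/⟨x+1⟩ : ē = (a+by)·f̄ in Z_n[y]/⟨y²+1⟩}`,
where the reductions into `Z_n[y]/⟨y²+1⟩` are induced by the ring homomorphism
`φ : ℤQ_{4n} → Z_n[y]/⟨y²+1⟩` with `φ(x) = -1`, `φ(y) = y`.  The isomorphism is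
expressed by an injective `ℤQ_{4n}`-linear map whose range is exactly the pullback. -/
theorem stmt8 (n : ℕ) (a b : ℤ) (hn : Odd n)
    (hco : Int.gcd (a ^ 2 + b ^ 2) (2 * n) = 1)
    (φ : QR n →+* Sn n)
    (hφx : φ (Xq n) = -1)
    (hφy : φ (Yq n) = Ideal.Quotient.mk _ (X : Polynomial (ZMod n))) :
    ∃ j : (Pideal n a b ⧸ xnP n a b) →ₗ[QR n]
        (QR n ⧸ Ideal.span {psi n}) × (QR n ⧸ Ideal.span {Xq n + 1}),
      Function.Injective j ∧
      (LinearMap.range j : Set ((QR n ⧸ Ideal.span {psi n}) × (QR n ⧸ Ideal.span {Xq n + 1}))) =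
        {ef | ∃ e f : QR n,
          Submodule.Quotient.mk e = ef.1 ∧ Submodule.Quotient.mk f = ef.2 ∧
          φ e = φ ((a : QR n) + (b : QR n) * Yq n) * φ f} := by
  obtain ⟨u, v, hsol⟩ : IsCoprime (a ^ 2 + b ^ 2) 2 :=
    (Int.isCoprime_iff_gcd_eq_one.2 hco).of_isCoprime_of_dvd_right (dvd_mul_right 2 _)
  have hg : toGaussianInt hn ((a : QR n) + b * Yq n) ≠ 0 := by
    rw [toGaussianInt_intCast_add_mul_Yq]
    intro h
    obtain ⟨rfl, rfl⟩ : a = 0 ∧ b = 0 := by simpa [Zsqrtd.ext_iff] using h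
    omega
  have hP : Pideal n a b = Ideal.span {(a : QR n) + b * Yq n} ⊔ Ideal.span {Xq n + 1} :=
    Ideal.span_insert _ _
  let j₀ := pullbackMap (Ideal.span {psi n}) (mul_mem_span_X_add_one_iff hn hg) hP
  have hker : LinearMap.ker j₀ = xnP n a b := by
    rw [ker_pullbackMap, span_psi_inf_span_X_add_one hn, xnP_eq hn hsol]
  refine ⟨(xnP n a b).liftQ j₀ hker.ge,
    LinearMap.ker_eq_bot.1 (Submodule.ker_liftQ_eq_bot _ _ _ hker.le), ?_⟩
  rw [Submodule.range_liftQ, range_pullbackMap]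
  simp_rw [mem_span_psi_sup_span_X_add_one_iff hn hφx hφy, map_sub, map_mul, sub_eq_zero, mul_comm]
end

section
/- Let P be the left ideal ⟨-3+4y, x+1⟩ of ZQ₂₈. Then ZQ₂₈ ⊕ P is a free ZQ₂₈-module of rank 2; that is, P is stably free. -/
open MonoidAlgebra

/-- the left ideal `⟨-3+4y, x+1⟩` of `ℤQ₂₈` -/
noncomputable def P28 : Ideal (QR 7) :=
  Ideal.span {(-3 : QR 7) + (4 : QR 7) * Yq 7, Xq 7 + 1}

/-!
The rows of `Φ` lie in `ZQ₂₈ ⊕ P`. They span it because `(1, 0)`, `(0, -3 + 4y)` and `(0, x + 1)`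
are explicit left combinations of them (the matrix `W`), and they are linearly independent because
`Φ S = 25` for an explicit matrix `S` and `ZQ₂₈` has no additive torsion. Every identity in `ZQ₂₈`
that this needs is checked on coefficient functions, where multiplication is convolution over the
group and equality is decidable.
-/

open scoped Matrix

namespace MonoidAlgebra

variable {k G : Type*} [Semiring k] [Group G] [Fintype G]

def conv (c d : G → k) : G → k := fun g => ∑ h, c h * d (h⁻¹ * g)

def convMul {l m n : Type*} [Fintype m] (M : Matrix l m (G → k)) (N : Matrix m n (G → k)) :
    Matrix l n (G → k) :=
  Matrix.of fun i j => ∑ x, conv (M i x) (N x j)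

noncomputable def ofFun : (G → k) ≃+ MonoidAlgebra k G :=
  (coeffAddEquiv.trans Finsupp.addEquivFunOnFinite).symm

lemma ofFun_symm_apply (x : MonoidAlgebra k G) : ofFun.symm x = ⇑x.coeff := rfl

@[simp]
lemma coeff_ofFun (c : G → k) (g : G) : (ofFun c).coeff g = c g :=
  congrFun (ofFun.symm_apply_apply c) g

lemma ofFun_mul (c d : G → k) : ofFun c * ofFun d = ofFun (conv c d) := by
  apply ofFun.symm.injective
  ext g
  simp [ofFun_symm_apply, coeff_mul_apply_left, Finsupp.sum_fintype, conv]

lemma map_ofFun_mul_map_ofFun {l m n : Type*} [Fintype m] (M : Matrix l m (G → k))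
    (N : Matrix m n (G → k)) : M.map ofFun * N.map ofFun = (convMul M N).map ofFun := by
  ext i j
  simp [Matrix.mul_apply, convMul, ofFun_mul, map_sum]

lemma ofFun_single [DecidableEq G] (g : G) (r : k) : ofFun (Pi.single g r) = single g r := by
  apply ofFun.symm.injective
  simp [ofFun_symm_apply, coeff_single, Finsupp.single_eq_pi_single]

end MonoidAlgebra

theorem Matrix.vecMul_injective_of_mul_eq_nsmul_one {R : Type*} [Ring R] [IsAddTorsionFree R]
    {m n : Type*} [Fintype m] [Fintype n] [DecidableEq n] {A : Matrix n m R} {B : Matrix m n R}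
    {k : ℕ} (hk : k ≠ 0) (hAB : A * B = k • 1) : Function.Injective (fun v : n → R => v ᵥ* A) := by
  intro v w hvw
  have : v ᵥ* (A * B) = w ᵥ* (A * B) := by
    simp only [← vecMul_vecMul]
    exact congrArg (· ᵥ* B) hvw
  rwa [hAB, vecMul_smul, vecMul_smul, vecMul_one, vecMul_one, nsmul_right_inj hk] at this

namespace Submodule

variable {R : Type*} [Ring R] (P : Submodule R R)

def prodToPi : R × P →ₗ[R] Fin 2 → R :=
  (LinearEquiv.finTwoArrow R R).symm.toLinearMap ∘ₗ LinearMap.id.prodMap P.subtype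

@[simp]
lemma prodToPi_apply (x : R × P) : P.prodToPi x = ![x.1, x.2] := rfl

lemma prodToPi_injective : Function.Injective P.prodToPi :=
  (LinearEquiv.finTwoArrow R R).symm.injective.comp
    (Prod.map_injective.mpr ⟨Function.injective_id, Subtype.coe_injective⟩)

variable {ι : Type*} [Fintype ι]

def prodRows (Φ : Matrix ι (Fin 2) R) (hΦ : ∀ i, Φ i 1 ∈ P) (i : ι) : R × P :=
  (Φ i 0, ⟨Φ i 1, hΦ i⟩)

lemma prodToPi_sum_smul_prodRows (Φ : Matrix ι (Fin 2) R) (hΦ : ∀ i, Φ i 1 ∈ P) (v : ι → R) :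
    P.prodToPi (∑ i, v i • P.prodRows Φ hΦ i) = v ᵥ* Φ := by
  ext j
  fin_cases j <;> simp [prodRows, Matrix.vecMul, dotProduct]

lemma linearIndependent_prodRows [DecidableEq ι] [IsAddTorsionFree R] {Φ : Matrix ι (Fin 2) R}
    (hΦ : ∀ i, Φ i 1 ∈ P) {S : Matrix (Fin 2) ι R} {k : ℕ} (hk : k ≠ 0) (hS : Φ * S = k • 1) :
    LinearIndependent R (P.prodRows Φ hΦ) := by
  refine Fintype.linearIndependent_iff.mpr fun v hv => congrFun ?_
  apply Matrix.vecMul_injective_of_mul_eq_nsmul_one hk hS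
  show v ᵥ* Φ = 0 ᵥ* Φ
  rw [Matrix.zero_vecMul, ← prodToPi_sum_smul_prodRows P Φ hΦ, hv, map_zero]

lemma span_prodRows_eq_top {g₁ g₂ : R} {Φ : Matrix ι (Fin 2) R}
    (hΦ : ∀ i, Φ i 1 ∈ Ideal.span {g₁, g₂}) {W : Matrix (Fin 3) ι R}
    (hW : W * Φ = !![1, 0; 0, g₁; 0, g₂]) :
    span R (Set.range ((Ideal.span {g₁, g₂}).prodRows Φ hΦ)) = ⊤ := by
  set P := Ideal.span {g₁, g₂}
  set e : Fin 3 → R × P := fun j => ∑ i, W j i • P.prodRows Φ hΦ i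
  have he : ∀ j, e j ∈ span R (Set.range (P.prodRows Φ hΦ)) := fun j =>
    sum_mem fun i _ => smul_mem _ _ (subset_span (Set.mem_range_self i))
  have hWe : ∀ j, P.prodToPi (e j) = (W * Φ) j := fun j => prodToPi_sum_smul_prodRows ..
  refine eq_top_iff.mpr fun x _ => ?_
  obtain ⟨c, d, hcd⟩ := mem_span_pair.mp x.2.2
  have hx : x = x.1 • e 0 + c • e 1 + d • e 2 := by
    apply P.prodToPi_injective
    rw [map_add, map_add, map_smul, map_smul, map_smul, hWe, hWe, hWe, hW]
    ext j
    fin_cases j <;> simp [← hcd]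
  rw [hx]
  exact add_mem (add_mem (smul_mem _ _ (he 0)) (smul_mem _ _ (he 1))) (smul_mem _ _ (he 2))

end Submodule

instance {M : Type*} : IsAddTorsionFree (MonoidAlgebra ℤ M) :=
  Module.isTorsionFree_int_iff_isAddTorsionFree.mp inferInstance

namespace QuaternionGroup

-- `xa i` is `y * x ^ i`, so `ofFun (elim u v) = ∑ i, u i • x ^ i + ∑ i, v i • y * x ^ i`.
def elim {α : Type*} {n : ℕ} (u v : ZMod (2 * n) → α) : QuaternionGroup n → α
  | a i => u i
  | xa i => v i

end QuaternionGroup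

namespace Q28

open QuaternionGroup

-- `Φ` is the paper's matrix `(Φᵢⱼ)`, expanded in coefficients.
def Φ : Matrix (Fin 2) (Fin 2) (QuaternionGroup 7 → ℤ) :=
  !![elim ![-6, -1, 2, -1, 1, -1, 1, 7, 1, -1, 1, -1, 1, -1]
      ![1, -2, 3, -2, 2, 5, -5, -1, 2, -3, 2, -2, -5, 5],
    elim ![8, 0, 0, 1, -1, 7, 0, -7, 0, 0, -1, 1, -7, 0]
      ![1, 0, 0, -1, 0, 0, 0, -1, 0, 0, 0, -1, 0, 0];
    elim ![-12, -14, 21, -14, 14, 25, -25, 13, 14, -21, 14, -14, -25, 25]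
      ![39, 0, 0, 0, 0, 20, -19, -39, 0, 0, 0, 0, -19, 20],
    elim ![25, 1, -1, 1, -1, 20, -1, -26, -1, 1, -1, 1, -21, 1]
      ![-41, 2, -2, -5, 5, -37, -2, 41, -2, 2, 5, -5, 37, 2]]

def S : Matrix (Fin 2) (Fin 2) (QuaternionGroup 7 → ℤ) :=
  !![elim ![-100, -75, -575, -550, 75, 100, 75, 100, 75, 600, 575, -75, -100, -75]
      ![25, -25, -150, -25, -950, -1000, 25, -25, 25, 150, 25, 950, 1000, -25],
    elim ![0, 0, 200, 175, 0, 25, 0, -25, 0, -175, -175, 0, 0, 0]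
      ![0, 0, 25, 0, -25, 0, 0, -25, -25, -25, -25, 0, 25, 25];
    elim ![-1127, -348, -127, -348, 523, 327, 348, 1102, 348, 152, 348, -523, -302, -348]
      ![139, 361, 639, 336, -361, -614, -336, -139, -336, -614, -361, 336, 639, 361],
    elim ![100, 75, 100, 75, -100, -125, -75, -100, -75, -100, -75, 75, 100, 75]
      ![150, 25, 0, 50, -25, 25, -25, -150, -25, 0, -50, 25, -25, 25]]

def W : Matrix (Fin 3) (Fin 2) (QuaternionGroup 7 → ℤ) :=
  !![elim ![-4, -3, -23, -22, 3, 4, 3, 4, 3, 24, 23, -3, -4, -3]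
      ![1, -1, -6, -1, -38, -40, 1, -1, 1, 6, 1, 38, 40, -1],
    elim ![0, 0, 8, 7, 0, 1, 0, -1, 0, -7, -7, 0, 0, 0]
      ![0, 0, 1, 0, -1, 0, 0, -1, -1, -1, -1, 0, 1, 1];
    elim ![113, -12, -83, -16, -9, 63, 16, -110, 16, 84, 12, 5, -62, -12]
      ![-197, -99, -97, -96, 127, 126, 96, 193, 96, 98, 99, -124, -125, -99],
    elim ![-36, -13, -12, -17, 16, 11, 13, 36, 13, 12, 17, -13, -8, -13]
      ![-2, 9, 16, 6, -13, -23, -9, 2, -9, -16, -6, 9, 19, 9];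
    elim ![-59, -59, -19, -19, 7, 34, 27, 58, 58, 20, 20, -7, -33, -26]
      ![20, 40, 39, -1, -39, -38, -19, -19, -38, -39, -1, 39, 40, 20],
    elim ![7, 7, 7, 7, -1, -9, -8, -7, -7, -7, -7, 0, 7, 7]
      ![7, 1, 2, 1, 0, 0, -7, -7, -1, -2, -1, 0, 0, 7]]

def C : Matrix (Fin 2) (Fin 2) (QuaternionGroup 7 → ℤ) :=
  !![elim ![0, 0, 0, 0, 0, 0, 0, 0, 0, 0, 0, 0, 0, -1]
      ![-1, -1, 0, 0, 0, 0, 0, 0, 0, 0, 0, 0, 0, 0],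
    elim ![8, -8, 8, -7, 6, 1, 3, -6, 6, -6, 5, -4, -3, 0]
      ![-2, 3, -3, 2, -2, 2, -2, 1, -1, 1, -1, 0, 0, 0];
    0,
    elim ![25, -24, 23, -22, 21, -1, 0, -26, 25, -24, 23, -22, 1, 0]
      ![-41, 43, -45, 40, -35, -2, 0, 41, -43, 45, -40, 35, 2, 0]]

def g₁ : QuaternionGroup 7 → ℤ := Pi.single 1 (-3) + Pi.single (xa 0) 4

def g₂ : QuaternionGroup 7 → ℤ := Pi.single 1 1 + Pi.single (a 1) 1

lemma ofFun_g₁ : ofFun g₁ = -3 + 4 * Yq 7 := by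
  simp [g₁, ofFun_single, Yq, ofNat_def, MonoidAlgebra.single_neg]

lemma ofFun_g₂ : ofFun g₂ = Xq 7 + 1 := by
  rw [g₂, map_add, ofFun_single, ofFun_single, add_comm, Xq, of_apply, MonoidAlgebra.one_def]

lemma convMul_Φ_S : convMul Φ S = Matrix.diagonal fun _ => Pi.single 1 25 := by
  decide +kernel

lemma convMul_W_Φ : convMul W Φ = !![Pi.single 1 1, 0; 0, g₁; 0, g₂] := by
  decide +kernel

lemma convMul_C_gens : convMul C !![g₁; g₂] = Matrix.of fun i _ => Φ i 1 := by
  decide +kernel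

lemma map_Φ_mul_map_S : Φ.map ofFun * S.map ofFun = 25 • 1 := by
  rw [map_ofFun_mul_map_ofFun, convMul_Φ_S]
  ext i j
  fin_cases i <;> fin_cases j <;> simp [ofFun_single, ofNat_def]

lemma map_W_mul_map_Φ :
    W.map ofFun * Φ.map ofFun = !![1, 0; 0, -3 + 4 * Yq 7; 0, Xq 7 + 1] := by
  rw [map_ofFun_mul_map_ofFun, convMul_W_Φ, ← ofFun_g₁, ← ofFun_g₂]
  ext i j
  fin_cases i <;> fin_cases j <;> simp [ofFun_single, MonoidAlgebra.one_def]

lemma map_Φ_mem_P28 (i : Fin 2) : Φ.map ofFun i 1 ∈ P28 := by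
  have h := congrFun₂ (map_ofFun_mul_map_ofFun C !![g₁; g₂]) i 0
  rw [convMul_C_gens] at h
  refine Submodule.mem_span_pair.mpr ⟨ofFun (C i 0), ofFun (C i 1), ?_⟩
  simpa [Matrix.mul_apply, Fin.sum_univ_two, ofFun_g₁, ofFun_g₂] using h

end Q28

theorem stmt13 :
    Nonempty ((QR 7 × P28) ≃ₗ[QR 7] (Fin 2 → QR 7)) :=
  ⟨(Module.Basis.mk
    (P28.linearIndependent_prodRows Q28.map_Φ_mem_P28 (by norm_num) Q28.map_Φ_mul_map_S)
    (Submodule.span_prodRows_eq_top Q28.map_Φ_mem_P28 Q28.map_W_mul_map_Φ).ge).equivFun⟩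
end

section
/- Let M and M' be modules over a group ring ZG (G finite) with M' ⊕ ZG^k ≅ M ⊕ ZG^k, and let 0 → M → C₂ → C₁ → C₀ → Z → 0 be an exact sequence of ZG-modules with the C_i finitely generated stably free. Then there exists an exact sequence 0 → M' → Q₂ → C₁ → C₀ → Z → 0 with Q₂ finitely generated stably free. -/
open MonoidAlgebra

/-- the integral group ring of `G` -/
abbrev GA (G : Type) [Group G] : Type := MonoidAlgebra ℤ G

/-- the augmentation map -/
noncomputable def augG (G : Type) [Group G] : GA G →+* ℤ :=
  ((MonoidAlgebra.lift ℤ ℤ G) 1).toRingHom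

/-- a module is stably free if adding a finite free module makes it finite free -/
def StablyFree (A : Type) [Ring A] (M : Type) [AddCommGroup M] [Module A M] : Prop :=
  ∃ i j : ℕ, Nonempty ((M × (Fin i → A)) ≃ₗ[A] (Fin j → A))

/-!
With `F = ℤG^k`, the isomorphism `M' × F ≅ M × F` followed by `f2 × id` embeds `M' × F` into
`C₂ × F` with cokernel `range g2 ⊆ C₁`. A stably free `ℤG`-module is `ℤ`-torsion-free, so this cokernel is
a finitely generated torsion-free abelian group and the embedding splits over `ℤ`. Since `G` is
finite, `ℤG` is relatively injective: averaging a `ℤ`-linear map over `G` extends the projection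
`M' × F → F` to a `ℤG`-linear `r : C₂ × F → F`. The injection `F → C₂ × F` is then a section of
`r`, so `C₂ × F ≅ ker r × F`; thus `Q₂ = ker r` is stably free and `M' → ker r → C₁` is exact with
image `range g2 = ker g1`.
-/

namespace MonoidAlgebra

variable {k G : Type*} [CommRing k] [Group G]

variable (k G) in
noncomputable def projOne : k[G] →ₗ[k] k[G] :=
  lsingle 1 ∘ₗ Finsupp.lapply 1 ∘ₗ (coeffLinearEquiv k).toLinearMap

lemma projOne_apply (x : k[G]) : projOne k G x = single 1 (x.coeff 1) := rfl

variable [Fintype G]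

-- `x = ∑ g, g⁻¹ • (g • x)₁`: `k[G]` is coinduced from the trivial group.
theorem sumOfConjugatesEquivariant_projOne :
    (projOne k G).sumOfConjugatesEquivariant G = LinearMap.id := by
  refine LinearMap.ext fun x => ?_
  rw [LinearMap.sumOfConjugatesEquivariant_apply, LinearMap.id_apply]
  simp only [LinearMap.conjugate_apply, projOne_apply, smul_eq_mul, single_mul_single, mul_one,
    coeff_single_mul_apply, one_mul]
  apply coeff_injective
  rw [coeff_sum]
  simp only [coeff_single]
  exact (Fintype.sum_equiv (Equiv.inv G) _ (fun g => Finsupp.single g (x.coeff g))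
    fun _ => rfl).trans (Finsupp.univ_sum_single _)

variable {U W V : Type*} [AddCommGroup U] [Module k U] [Module k[G] U] [IsScalarTower k k[G] U]
  [AddCommGroup W] [Module k W] [Module k[G] W] [IsScalarTower k k[G] W]
  [AddCommGroup V] [Module k V] [Module k[G] V] [IsScalarTower k k[G] V]

theorem sumOfConjugatesEquivariant_comp (π : W →ₗ[k] V) (i : U →ₗ[k[G]] W) :
    π.sumOfConjugatesEquivariant G ∘ₗ i =
      (π ∘ₗ i.restrictScalars k).sumOfConjugatesEquivariant G := by
  ext u
  simp only [LinearMap.comp_apply, LinearMap.sumOfConjugatesEquivariant_apply,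
    LinearMap.conjugate_apply, LinearMap.restrictScalars_apply, map_smul]

theorem exists_comp_eq_of_retraction (j : U →ₗ[k[G]] W) (s : W →ₗ[k] U)
    (hs : s ∘ₗ j.restrictScalars k = LinearMap.id) (l : U →ₗ[k[G]] k[G]) :
    ∃ l' : W →ₗ[k[G]] k[G], l' ∘ₗ j = l := by
  refine ⟨(projOne k G ∘ₗ l.restrictScalars k ∘ₗ s).sumOfConjugatesEquivariant G, ?_⟩
  rw [sumOfConjugatesEquivariant_comp, LinearMap.comp_assoc, LinearMap.comp_assoc, hs,
    LinearMap.comp_id, ← sumOfConjugatesEquivariant_comp, sumOfConjugatesEquivariant_projOne,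
    LinearMap.id_comp]

theorem exists_comp_eq_pi_of_retraction {ι : Type*} (j : U →ₗ[k[G]] W) (s : W →ₗ[k] U)
    (hs : s ∘ₗ j.restrictScalars k = LinearMap.id) (l : U →ₗ[k[G]] ι → k[G]) :
    ∃ l' : W →ₗ[k[G]] ι → k[G], l' ∘ₗ j = l := by
  choose l' hl' using fun i => exists_comp_eq_of_retraction j s hs (LinearMap.proj i ∘ₗ l)
  exact ⟨LinearMap.pi l', LinearMap.ext fun u => funext fun i => LinearMap.congr_fun (hl' i) u⟩

end MonoidAlgebra

theorem exists_retraction_of_exact_of_isTorsionFree {R A B T : Type*} [CommRing R] [IsDomain R]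
    [IsPrincipalIdealRing R] [AddCommGroup A] [Module R A] [AddCommGroup B] [Module R B]
    [AddCommGroup T] [Module R T] [Module.Finite R B] [Module.IsTorsionFree R T]
    {j : A →ₗ[R] B} {f : B →ₗ[R] T} (hexact : Function.Exact j f) (hj : Function.Injective j) :
    ∃ s : B →ₗ[R] A, s ∘ₗ j = LinearMap.id := by
  have hexact' : Function.Exact j f.rangeRestrict := fun b => by
    rw [← hexact b, ← Subtype.coe_inj]; rfl
  obtain ⟨l, hl⟩ := f.rangeRestrict.exists_rightInverse_of_surjective f.range_rangeRestrict
  have hsplit := hexact'.split_tfae'.out 0 1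
  exact (hsplit.mp ⟨hj, l, hl⟩).2

theorem StablyFree.isTorsionFree_int {A M : Type} [Ring A] [Module.IsTorsionFree ℤ A]
    [AddCommGroup M] [Module A M] (h : StablyFree A M) : Module.IsTorsionFree ℤ M := by
  obtain ⟨i, n, ⟨e⟩⟩ := h
  refine Function.Injective.moduleIsTorsionFree (fun m => e (m, 0))
    (e.injective.comp fun _ _ h => congr_arg Prod.fst h) fun c m => ?_
  rw [← map_zsmul, Prod.smul_mk, smul_zero]

noncomputable def Fin.appendLinearEquiv (A : Type) [Ring A] (a b : ℕ) :
    ((Fin a → A) × (Fin b → A)) ≃ₗ[A] (Fin (a + b) → A) :=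
  (LinearEquiv.sumArrowLequivProdArrow (Fin a) (Fin b) A A).symm ≪≫ₗ
    LinearEquiv.funCongrLeft A A finSumFinEquiv.symm

theorem StablyFree.of_prod_equiv {A M N : Type} [Ring A] [AddCommGroup M] [Module A M]
    [AddCommGroup N] [Module A N] {k : ℕ} (e : (N × (Fin k → A)) ≃ₗ[A] (M × (Fin k → A)))
    (h : StablyFree A M) : StablyFree A N := by
  obtain ⟨i, n, ⟨eM⟩⟩ := h
  refine ⟨k + i, n + k, ⟨?_⟩⟩
  exact (LinearEquiv.refl A N).prodCongr (Fin.appendLinearEquiv A k i).symm ≪≫ₗ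
    (LinearEquiv.prodAssoc A N _ _).symm ≪≫ₗ e.prodCongr (LinearEquiv.refl A _) ≪≫ₗ
    LinearEquiv.prodAssoc A M _ _ ≪≫ₗ
    (LinearEquiv.refl A M).prodCongr (LinearEquiv.prodComm A _ _) ≪≫ₗ
    (LinearEquiv.prodAssoc A M _ _).symm ≪≫ₗ eM.prodCongr (LinearEquiv.refl A _) ≪≫ₗ
    Fin.appendLinearEquiv A n k

theorem Function.Exact.prodMap_id {R M N P F : Type*} [Ring R] [AddCommGroup M] [Module R M]
    [AddCommGroup N] [Module R N] [AddCommGroup P] [Module R P] [AddCommGroup F] [Module R F]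
    {f : M →ₗ[R] N} {g : N →ₗ[R] P} (h : Function.Exact f g) :
    Function.Exact (f.prodMap (LinearMap.id : F →ₗ[R] F)) (g ∘ₗ LinearMap.fst R N F) := by
  refine fun z => ⟨fun hz => ?_, ?_⟩
  · obtain ⟨m, hm⟩ := (h z.1).mp hz
    exact ⟨(m, z.2), Prod.ext hm rfl⟩
  · rintro ⟨w, rfl⟩
    exact h.apply_apply_eq_zero w.1

open LinearMap in
theorem exists_exact_ker_of_comp_eq_snd {R M F B C : Type*} [Ring R] [AddCommGroup M]
    [Module R M] [AddCommGroup F] [Module R F] [AddCommGroup B] [Module R B] [AddCommGroup C]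
    [Module R C] {j : M × F →ₗ[R] B} {p : B →ₗ[R] C} (hexact : Function.Exact j p)
    (hj : Function.Injective j) {r : B →ₗ[R] F} (hr : r ∘ₗ j = snd R M F) :
    ∃ (j' : M →ₗ[R] ker r) (p' : ker r →ₗ[R] C), Function.Injective j' ∧
      Function.Exact j' p' ∧ range p' = range p ∧ Nonempty ((ker r × F) ≃ₗ[R] B) := by
  have hrj (w : M × F) : r (j w) = w.2 := LinearMap.congr_fun hr w
  let j' : M →ₗ[R] ker r := (j ∘ₗ inl R M F).codRestrict (ker r) fun m => hrj (m, 0)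
  have hj'inj : Function.Injective j' := fun m m' h =>
    inl_injective (hj (congr_arg Subtype.val h))
  have hsection : r ∘ₗ (j ∘ₗ inr R M F) = LinearMap.id := by
    rw [← comp_assoc, hr, snd_comp_inr]
  obtain ⟨e, -⟩ := (exact_subtype_ker_map r).splitSurjectiveEquiv Subtype.val_injective
    ⟨_, hsection⟩
  refine ⟨j', p ∘ₗ (ker r).subtype, hj'inj, fun z => ?_, ?_, ⟨e.symm⟩⟩
  · constructor
    · intro hz
      obtain ⟨w, hw⟩ := (hexact z).mp hz
      have hw2 : w.2 = 0 := (hrj w).symm.trans (congr_arg r hw |>.trans z.2)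
      exact ⟨w.1, Subtype.ext (show j (w.1, 0) = z by rw [← hw, ← hw2])⟩
    · rintro ⟨m, rfl⟩
      exact (hexact _).mpr ⟨(m, 0), rfl⟩
  · refine le_antisymm (range_comp_le_range _ _) fun c ⟨b, hb⟩ => ?_
    refine ⟨⟨b - j (0, r b), by simp [hrj]⟩, ?_⟩
    have hp0 : p (j (0, r b)) = 0 := (hexact _).mpr ⟨_, rfl⟩
    simp [hp0, hb]

theorem stmt19_general (G : Type) [Group G] [Fintype G]
    (M M' C₂ C₁ C₀ : Type)
    [AddCommGroup M] [Module (GA G) M] [AddCommGroup M'] [Module (GA G) M']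
    [AddCommGroup C₂] [Module (GA G) C₂] [AddCommGroup C₁] [Module (GA G) C₁]
    [AddCommGroup C₀] [Module (GA G) C₀]
    (k : ℕ)
    (hstab : Nonempty ((M' × (Fin k → GA G)) ≃ₗ[GA G] (M × (Fin k → GA G))))
    (hC₂ : Module.Finite (GA G) C₂ ∧ StablyFree (GA G) C₂)
    (hC₁ : Module.Finite (GA G) C₁ ∧ StablyFree (GA G) C₁)
    (f2 : M →ₗ[GA G] C₂) (g2 : C₂ →ₗ[GA G] C₁) (g1 : C₁ →ₗ[GA G] C₀)
    (hinj : Function.Injective f2)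
    (hex2 : LinearMap.range f2 = LinearMap.ker g2)
    (hex1 : LinearMap.range g2 = LinearMap.ker g1) :
    ∃ Q₂ : ModuleCat (GA G),
      Module.Finite (GA G) Q₂ ∧ StablyFree (GA G) Q₂ ∧
      ∃ (j2 : M' →ₗ[GA G] Q₂) (q : Q₂ →ₗ[GA G] C₁),
        Function.Injective j2 ∧
        LinearMap.range j2 = LinearMap.ker q ∧
        LinearMap.range q = LinearMap.ker g1 := by
  obtain ⟨e⟩ := hstab
  have : Module.Finite (GA G) C₂ := hC₂.1
  have : Module.IsTorsionFree ℤ C₁ := hC₁.2.isTorsionFree_int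
  let j := f2.prodMap (LinearMap.id : (Fin k → GA G) →ₗ[GA G] _) ∘ₗ e.toLinearMap
  let p := g2 ∘ₗ LinearMap.fst (GA G) C₂ (Fin k → GA G)
  have hj : Function.Injective j :=
    (Prod.map_injective.mpr ⟨hinj, Function.injective_id⟩).comp e.injective
  have hexact : Function.Exact j p :=
    LinearEquiv.precomp_exact_iff_exact.mpr (LinearMap.exact_iff.mpr hex2.symm).prodMap_id
  have : Module.Finite ℤ (C₂ × (Fin k → GA G)) := Module.Finite.trans (GA G) _
  obtain ⟨s, hs⟩ := exists_retraction_of_exact_of_isTorsionFree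
    (j := j.restrictScalars ℤ) (f := p.restrictScalars ℤ) hexact hj
  obtain ⟨r, hr⟩ := MonoidAlgebra.exists_comp_eq_pi_of_retraction j s hs (LinearMap.snd _ _ _)
  obtain ⟨j', q, hj', hexact', hrange, ⟨E⟩⟩ := exists_exact_ker_of_comp_eq_snd hexact hj hr
  refine ⟨ModuleCat.of (GA G) (LinearMap.ker r),
    Module.Finite.of_surjective (LinearMap.fst _ _ _ ∘ₗ E.symm.toLinearMap)
      (Prod.fst_surjective.comp E.symm.surjective),
    hC₂.2.of_prod_equiv E, j', q, hj', hexact'.linearMap_ker_eq.symm, ?_⟩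
  rw [hrange, LinearMap.range_comp_of_range_eq_top _
    (LinearMap.range_eq_top.mpr LinearMap.fst_surjective), hex1]

/-- Swan's cancellation construction: if `M' ⊕ ℤG^k ≅ M ⊕ ℤG^k` and
`0 → M → C₂ → C₁ → C₀ → ℤ → 0` is exact with the `Cᵢ` finitely generated stably free
`ℤG`-modules (`ℤ` carrying the `ℤG`-action through the augmentation), then there is an
exact sequence `0 → M' → Q₂ → C₁ → C₀ → ℤ → 0` with `Q₂` finitely generated stably free. -/
theorem stmt19 (G : Type) [Group G] [Fintype G]
    (M M' C₂ C₁ C₀ : Type)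
    [AddCommGroup M] [Module (GA G) M] [AddCommGroup M'] [Module (GA G) M']
    [AddCommGroup C₂] [Module (GA G) C₂] [AddCommGroup C₁] [Module (GA G) C₁]
    [AddCommGroup C₀] [Module (GA G) C₀]
    (k : ℕ)
    (hstab : Nonempty ((M' × (Fin k → GA G)) ≃ₗ[GA G] (M × (Fin k → GA G))))
    (hC₂ : Module.Finite (GA G) C₂ ∧ StablyFree (GA G) C₂)
    (hC₁ : Module.Finite (GA G) C₁ ∧ StablyFree (GA G) C₁)
    (hC₀ : Module.Finite (GA G) C₀ ∧ StablyFree (GA G) C₀)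
    (f2 : M →ₗ[GA G] C₂) (g2 : C₂ →ₗ[GA G] C₁) (g1 : C₁ →ₗ[GA G] C₀)
    (e0 : C₀ →+ ℤ)
    (he0 : ∀ (r : GA G) (c : C₀), e0 (r • c) = augG G r * e0 c)
    (hinj : Function.Injective f2)
    (hex2 : LinearMap.range f2 = LinearMap.ker g2)
    (hex1 : LinearMap.range g2 = LinearMap.ker g1)
    (hex0 : ∀ c : C₀, c ∈ LinearMap.range g1 ↔ e0 c = 0)
    (hsurj : Function.Surjective e0) :
    ∃ Q₂ : ModuleCat (GA G),
      Module.Finite (GA G) Q₂ ∧ StablyFree (GA G) Q₂ ∧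
      ∃ (j2 : M' →ₗ[GA G] Q₂) (q : Q₂ →ₗ[GA G] C₁),
        Function.Injective j2 ∧
        LinearMap.range j2 = LinearMap.ker q ∧
        LinearMap.range q = LinearMap.ker g1 :=
  stmt19_general G M M' C₂ C₁ C₀ k hstab hC₂ hC₁ f2 g2 g1 hinj hex2 hex1
end
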